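/- Let I = [a,b] and J = [c,d] be closed bounded real intervals and f : Jⁿ → I a function. The following are equivalent: (i) f is a quasi-Sugeno integral; (ii) f is comonotonic maxitive and comonotonic minitive; (iii) f is nondecreasing and there exists a nondecreasing function φ : J → I such that f(r ∨ x) = φ(r) ∨ f(x) and f(r ∧ x) = φ(r) ∧ f(x) for every x ∈ Jⁿ and r ∈ J, where r ∨ x (resp. r ∧ x) is the tuple with i-th component r ∨ x_i (resp. r ∧ x_i); moreover, in (iii) one may take φ(x) = f(x,…,x). -/

import Mathlib

/-!
Sort `x` along `σ` and let `e_S` be the tuple equal to `d` on `S` and to `c` off `S`. Then `x` is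
the join of the tuples `x_{σ i} ∧ e_{S_i}`, all sorted by `σ`. If `f` is nondecreasing along
comonotonic pairs and satisfies `f (r ∨ x) = φ r ∨ f x` and `f (r ∧ x) = φ r ∧ f x`, then each
of these tuples has value `φ (x_{σ i}) ∧ f e_{S_i}`, and restoring the entries
`x_{σ (n-1)}, …, x_{σ 0}` of the constant tuple `c` one at a time shows that `f x` is the
Sugeno integral of `φ ∘ x` for `μ S = f e_S`. Comonotonic maxitivity and minitivity give exactly
these hypotheses with `φ r = f (r, …, r)`. Conversely, along a common sorting permutation the
defining supremum of a quasi-Sugeno integral distributes over `∨` and `∧`, and each of its terms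
`φ (x_{σ i}) ∧ μ S_i` is dominated by a term of the integral of any larger tuple.
-/

/-- `S↑_σ(i)` (0-indexed): the set `{σ(i), σ(i+1), …, σ(n-1)}`.  For `i = n` it is empty. -/
def SUp {n : ℕ} (σ : Equiv.Perm (Fin n)) (i : ℕ) : Finset (Fin n) :=
  (Finset.univ.filter (fun j : Fin n => i ≤ (j : ℕ))).image σ

/-- `S↓_σ(i)`: the set `{σ(0), …, σ(i-1)}`.  For `i = 0` it is empty. -/
def SDown {n : ℕ} (σ : Equiv.Perm (Fin n)) (i : ℕ) : Finset (Fin n) :=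
  (Finset.univ.filter (fun j : Fin n => (j : ℕ) < i)).image σ

/-- Two tuples are comonotonic if some permutation sorts both nondecreasingly. -/
def Comonotone {n : ℕ} (x y : Fin n → ℝ) : Prop :=
  ∃ σ : Equiv.Perm (Fin n), Monotone (x ∘ σ) ∧ Monotone (y ∘ σ)

/-- The tuple `r·1_S`. -/
def indTuple {n : ℕ} (S : Finset (Fin n)) (r : ℝ) : Fin n → ℝ :=
  fun j => if j ∈ S then r else 0

/-- The signed Choquet integral of `x` w.r.t. `v`, computed via a sorting permutation. -/
noncomputable def Cv {n : ℕ} (v : Finset (Fin n) → ℝ) (x : Fin n → ℝ) : ℝ :=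
  ∑ i : Fin n,
    x (Tuple.sort x i) *
      (v (SUp (Tuple.sort x) (i : ℕ)) - v (SUp (Tuple.sort x) ((i : ℕ) + 1)))

/-- `f` is the restriction to `Iⁿ` of a signed Choquet integral. -/
def IsSignedChoquetOn {n : ℕ} (I : Set ℝ) (f : (Fin n → ℝ) → ℝ) : Prop :=
  ∃ v : Finset (Fin n) → ℝ, v ∅ = 0 ∧
    ∀ σ : Equiv.Perm (Fin n), ∀ x : Fin n → ℝ, (∀ i, x i ∈ I) → Monotone (x ∘ σ) →
      f x = ∑ i : Fin n, x (σ i) * (v (SUp σ (i : ℕ)) - v (SUp σ ((i : ℕ) + 1)))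

/-- `f` is the restriction to `Iⁿ` of a symmetric signed Choquet integral
`Č_v(x) = C_v(x⁺) - C_v(x⁻)`. -/
def IsSymSignedChoquetOn {n : ℕ} (I : Set ℝ) (f : (Fin n → ℝ) → ℝ) : Prop :=
  ∃ v : Finset (Fin n) → ℝ, v ∅ = 0 ∧
    ∀ x : Fin n → ℝ, (∀ i, x i ∈ I) →
      f x = Cv v (fun i => max (x i) 0) - Cv v (fun i => max (-x i) 0)

/-- Comonotonic modularity (on tuples with entries in `D`). -/
def ComonModularOn {n : ℕ} (D : Set ℝ) (f : (Fin n → ℝ) → ℝ) : Prop :=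
  ∀ x y : Fin n → ℝ, (∀ i, x i ∈ D) → (∀ i, y i ∈ D) → Comonotone x y →
    f x + f y = f (fun i => min (x i) (y i)) + f (fun i => max (x i) (y i))

/-- Comonotonic additivity (on tuples with entries in `D`). -/
def ComonAdditiveOn {n : ℕ} (D : Set ℝ) (f : (Fin n → ℝ) → ℝ) : Prop :=
  ∀ x y : Fin n → ℝ, (∀ i, x i ∈ D) → (∀ i, y i ∈ D) → Comonotone x y →
    (∀ i, x i + y i ∈ D) → f (fun i => x i + y i) = f x + f y

/-- Comonotonic maxitivity. -/
def ComonMaxitiveOn {n : ℕ} (D : Set ℝ) (f : (Fin n → ℝ) → ℝ) : Prop :=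
  ∀ x y : Fin n → ℝ, (∀ i, x i ∈ D) → (∀ i, y i ∈ D) → Comonotone x y →
    f (fun i => max (x i) (y i)) = max (f x) (f y)

/-- Comonotonic minitivity. -/
def ComonMinitiveOn {n : ℕ} (D : Set ℝ) (f : (Fin n → ℝ) → ℝ) : Prop :=
  ∀ x y : Fin n → ℝ, (∀ i, x i ∈ D) → (∀ i, y i ∈ D) → Comonotone x y →
    f (fun i => min (x i) (y i)) = min (f x) (f y)

/-- Horizontal min-additivity. -/
def HorizMinAdditiveOn {n : ℕ} (D : Set ℝ) (f : (Fin n → ℝ) → ℝ) : Prop :=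
  ∀ x : Fin n → ℝ, (∀ i, x i ∈ D) → ∀ c ∈ D, (∀ i, x i - min (x i) c ∈ D) →
    f x = f (fun i => min (x i) c) + f (fun i => x i - min (x i) c)

/-- Horizontal max-additivity. -/
def HorizMaxAdditiveOn {n : ℕ} (D : Set ℝ) (f : (Fin n → ℝ) → ℝ) : Prop :=
  ∀ x : Fin n → ℝ, (∀ i, x i ∈ D) → ∀ c ∈ D, (∀ i, x i - max (x i) c ∈ D) →
    f x = f (fun i => max (x i) c) + f (fun i => x i - max (x i) c)

/-- Horizontal median-additivity (for `I` centered at `0`). -/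
def HorizMedAdditiveOn {n : ℕ} (I : Set ℝ) (f : (Fin n → ℝ) → ℝ) : Prop :=
  ∀ x : Fin n → ℝ, (∀ i, x i ∈ I) → ∀ c ∈ I, 0 ≤ c →
    f x = f (fun i => max (-c) (min (x i) c)) + f (fun i => x i - min (x i) c)
        + f (fun i => x i - max (x i) (-c))

/-- Invariance under horizontal min-differences (for domains of nonnegative tuples). -/
def InvHMinDiffOn {n : ℕ} (D : Set ℝ) (f : (Fin n → ℝ) → ℝ) : Prop :=
  ∀ x : Fin n → ℝ, (∀ i, x i ∈ D) → ∀ c ∈ D,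
    f x - f (fun i => min (x i) c) =
      f (fun i => if x i ≤ c then 0 else x i) -
        f (fun i => min (if x i ≤ c then 0 else x i) c)

/-- Invariance under horizontal max-differences (for domains of nonpositive tuples). -/
def InvHMaxDiffOn {n : ℕ} (D : Set ℝ) (f : (Fin n → ℝ) → ℝ) : Prop :=
  ∀ x : Fin n → ℝ, (∀ i, x i ∈ D) → ∀ c ∈ D,
    f x - f (fun i => max (x i) c) =
      f (fun i => if c ≤ x i then 0 else x i) -
        f (fun i => max (if c ≤ x i then 0 else x i) c)

/-- `⋀_{i ∈ S} x i`, with the convention that the empty infimum is `b`. -/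
noncomputable def infWith {n : ℕ} (b : ℝ) (S : Finset (Fin n)) (x : Fin n → ℝ) : ℝ :=
  if h : S.Nonempty then S.inf' h x else b

/-- An `[a,b]`-valued capacity. -/
def IsCapacityOn {n : ℕ} (a b : ℝ) (μ : Finset (Fin n) → ℝ) : Prop :=
  μ ∅ = a ∧ μ Finset.univ = b ∧ ∀ S T : Finset (Fin n), S ⊆ T → μ S ≤ μ T

/-- `f` is nondecreasing (in each argument) on tuples with entries in `D`. -/
def NondecreasingOn {n : ℕ} (D : Set ℝ) (f : (Fin n → ℝ) → ℝ) : Prop :=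
  ∀ x y : Fin n → ℝ, (∀ i, x i ∈ D) → (∀ i, y i ∈ D) → (∀ i, x i ≤ y i) → f x ≤ f y


open Finset

section SortingPermutations

variable {n : ℕ} {σ : Equiv.Perm (Fin n)}

lemma mem_SUp {k : ℕ} {j : Fin n} : j ∈ SUp σ k ↔ k ≤ (σ.symm j : ℕ) := by
  simp only [SUp, mem_image, mem_filter, mem_univ, true_and]
  exact ⟨by rintro ⟨i, hi, rfl⟩; simpa using hi, fun h => ⟨σ.symm j, h, σ.apply_symm_apply j⟩⟩

lemma apply_mem_SUp {k : ℕ} {i : Fin n} : σ i ∈ SUp σ k ↔ k ≤ i := by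
  simp [mem_SUp]

lemma SUp_zero : SUp σ 0 = univ := by
  ext j
  simp [mem_SUp]

lemma SUp_self : SUp σ n = ∅ := by
  ext j
  simp [mem_SUp]

lemma SUp_nonempty {k : ℕ} (hk : k < n) : (SUp σ k).Nonempty :=
  ⟨σ ⟨k, hk⟩, apply_mem_SUp.2 le_rfl⟩

lemma SUp_ne_univ {i : Fin n} (hi : (i : ℕ) ≠ 0) : SUp σ i ≠ univ := fun h =>
  hi (Nat.le_zero.1 (apply_mem_SUp.1 (h ▸ mem_univ (σ ⟨0, i.pos⟩))))

lemma exists_apply_mem_subset_SUp {S : Finset (Fin n)} (hS : S.Nonempty) :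
    ∃ m : Fin n, σ m ∈ S ∧ S ⊆ SUp σ m := by
  obtain ⟨j, hjS, hj⟩ := mem_image.1 (min'_mem (S.image σ.symm) (hS.image σ.symm))
  refine ⟨σ.symm j, by simpa using hjS, fun k hk => mem_SUp.2 ?_⟩
  rw [hj]
  exact min'_le _ _ (mem_image_of_mem σ.symm hk)

lemma apply_le_of_mem_SUp {x : Fin n → ℝ} (hx : Monotone (x ∘ σ)) {i j : Fin n}
    (hj : j ∈ SUp σ i) : x (σ i) ≤ x j := by
  simpa using hx (show i ≤ σ.symm j from mem_SUp.1 hj)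

end SortingPermutations

section Comonotone

variable {n : ℕ} {D : Set ℝ} {f : (Fin n → ℝ) → ℝ}

lemma comonotone_of_forall_not_lt_lt {u v : Fin n → ℝ}
    (h : ∀ p q, u p < u q → ¬v q < v p) : Comonotone u v := by
  -- a permutation sorting `u + v` sorts both, for lack of discordant pairs
  refine ⟨Tuple.sort (u + v), fun i j hij => ?_, fun i j hij => ?_⟩ <;>
  · have hs := Tuple.monotone_sort (u + v) hij
    simp only [Function.comp_apply, Pi.add_apply] at hs ⊢
    by_contra! hc
    first
    | exact h _ _ hc (by linarith)
    | exact h _ _ (by linarith) hc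

lemma comonotone_const_left (r : ℝ) (x : Fin n → ℝ) : Comonotone (fun _ => r) x :=
  ⟨Tuple.sort x, monotone_const, Tuple.monotone_sort x⟩

def ComonNondecreasingOn (D : Set ℝ) (f : (Fin n → ℝ) → ℝ) : Prop :=
  ∀ x y : Fin n → ℝ, (∀ i, x i ∈ D) → (∀ i, y i ∈ D) → Comonotone x y →
    (∀ i, x i ≤ y i) → f x ≤ f y

lemma NondecreasingOn.comonNondecreasingOn (hf : NondecreasingOn D f) :
    ComonNondecreasingOn D f :=
  fun x y hx hy _ hxy => hf x y hx hy hxy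

lemma ComonMaxitiveOn.comonNondecreasingOn (hf : ComonMaxitiveOn D f) :
    ComonNondecreasingOn D f := by
  intro x y hx hy hco hxy
  have h := hf x y hx hy hco
  rw [show (fun i => max (x i) (y i)) = y from funext fun i => max_eq_right (hxy i)] at h
  exact h ▸ le_max_left _ _

lemma ComonNondecreasingOn.monotoneOn_diag (hf : ComonNondecreasingOn D f) :
    MonotoneOn (fun r => f fun _ => r) D :=
  fun r hr _ hs hrs =>
    hf _ _ (fun _ => hr) (fun _ => hs) (comonotone_const_left r _) (fun _ => hrs)

def MaxMinHomogeneousOn (D : Set ℝ) (φ : ℝ → ℝ) (f : (Fin n → ℝ) → ℝ) : Prop :=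
  ∀ x : Fin n → ℝ, (∀ i, x i ∈ D) → ∀ r ∈ D,
    f (fun i => max r (x i)) = max (φ r) (f x) ∧ f (fun i => min r (x i)) = min (φ r) (f x)

lemma maxMinHomogeneousOn_diag (hmax : ComonMaxitiveOn D f) (hmin : ComonMinitiveOn D f) :
    MaxMinHomogeneousOn D (fun r => f fun _ => r) f :=
  fun x hx r hr =>
    ⟨hmax _ x (fun _ => hr) hx (comonotone_const_left r x),
      hmin _ x (fun _ => hr) hx (comonotone_const_left r x)⟩

variable {φ : ℝ → ℝ}

lemma MaxMinHomogeneousOn.le_apply (hf : MaxMinHomogeneousOn D φ f) {x : Fin n → ℝ}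
    (hx : ∀ i, x i ∈ D) {r : ℝ} (hr : r ∈ D) (hrx : ∀ i, r ≤ x i) : φ r ≤ f x := by
  have h := (hf x hx r hr).1
  simp only [max_eq_right (hrx _)] at h
  exact h ▸ le_max_left _ _

lemma MaxMinHomogeneousOn.apply_le (hf : MaxMinHomogeneousOn D φ f) {x : Fin n → ℝ}
    (hx : ∀ i, x i ∈ D) {r : ℝ} (hr : r ∈ D) (hxr : ∀ i, x i ≤ r) : f x ≤ φ r := by
  have h := (hf x hx r hr).2
  simp only [min_eq_right (hxr _)] at h
  exact h ▸ min_le_left _ _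

end Comonotone

section SupMin

variable {ι α : Type*} [LinearOrder α] {s : Finset ι} (H : s.Nonempty)

lemma sup'_min_max_distrib (u v w : ι → α) :
    s.sup' H (fun i => min (max (u i) (v i)) (w i)) =
      max (s.sup' H fun i => min (u i) (w i)) (s.sup' H fun i => min (v i) (w i)) := by
  simp_rw [min_max_distrib_right]
  refine le_antisymm (sup'_le _ _ fun i hi => max_le_max ?_ ?_) (max_le ?_ ?_)
  · exact le_sup' (fun i => min (u i) (w i)) hi
  · exact le_sup' (fun i => min (v i) (w i)) hi
  · exact sup'_le _ _ fun i hi => le_sup'_of_le _ hi (le_max_left _ _)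
  · exact sup'_le _ _ fun i hi => le_sup'_of_le _ hi (le_max_right _ _)

lemma sup'_min_min_of_monotone [LinearOrder ι] {u v : ι → α} (hu : Monotone u)
    (hv : Monotone v) (w : ι → α) :
    s.sup' H (fun i => min (min (u i) (v i)) (w i)) =
      min (s.sup' H fun i => min (u i) (w i)) (s.sup' H fun i => min (v i) (w i)) := by
  refine le_antisymm (sup'_le _ _ fun i hi => le_min ?_ ?_) ?_
  · exact le_sup'_of_le _ hi (min_le_min_right _ (min_le_left _ _))
  · exact le_sup'_of_le _ hi (min_le_min_right _ (min_le_right _ _))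
  obtain ⟨j, hj, hj_eq⟩ := exists_mem_eq_sup' H fun i => min (u i) (w i)
  obtain ⟨k, hk, hk_eq⟩ := exists_mem_eq_sup' H fun i => min (v i) (w i)
  rw [hj_eq, hk_eq]
  -- at the later of the two maximizers, monotonicity of `u` and `v` bounds both suprema
  rcases le_total j k with hjk | hkj
  · refine le_sup'_of_le _ hk (le_min (le_min ?_ ?_) ?_)
    · exact min_le_of_left_le (min_le_of_left_le (hu hjk))
    · exact min_le_of_right_le (min_le_left _ _)
    · exact min_le_of_right_le (min_le_right _ _)
  · refine le_sup'_of_le _ hj (le_min (le_min ?_ ?_) ?_)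
    · exact min_le_of_left_le (min_le_left _ _)
    · exact min_le_of_right_le (min_le_of_left_le (hv hkj))
    · exact min_le_of_left_le (min_le_right _ _)

end SupMin

lemma le_sup'_of_forall_le_max_succ {α : Type*} [LinearOrder α] {n : ℕ}
    (H : (univ : Finset (Fin n)).Nonempty) (t : Fin n → α) (g : ℕ → α)
    (hstep : ∀ k (hk : k < n), g k ≤ max (t ⟨k, hk⟩) (g (k + 1)))
    (hlast : g n ≤ univ.sup' H t) : g 0 ≤ univ.sup' H t :=
  Nat.decreasingInduction (motive := fun k _ => g k ≤ univ.sup' H t)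
    (fun k hk ih => (hstep k hk).trans (max_le (le_sup' t (mem_univ _)) ih)) hlast
    (Nat.zero_le n)

section Sugeno

variable {n : ℕ} (hn : 0 < n) {μ : Finset (Fin n) → ℝ} {σ : Equiv.Perm (Fin n)}

/-- This is `S_μ(z)` when `z ∘ σ` is monotone. -/
def sugeno (μ : Finset (Fin n) → ℝ) (σ : Equiv.Perm (Fin n)) (z : Fin n → ℝ) : ℝ :=
  univ.sup' ⟨⟨0, hn⟩, mem_univ _⟩ fun i => min (z (σ i)) (μ (SUp σ i))

lemma sugeno_max (z w : Fin n → ℝ) :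
    sugeno hn μ σ (fun j => max (z j) (w j)) = max (sugeno hn μ σ z) (sugeno hn μ σ w) :=
  sup'_min_max_distrib _ _ _ _

lemma sugeno_min {z w : Fin n → ℝ} (hz : Monotone (z ∘ σ)) (hw : Monotone (w ∘ σ)) :
    sugeno hn μ σ (fun j => min (z j) (w j)) = min (sugeno hn μ σ z) (sugeno hn μ σ w) :=
  sup'_min_min_of_monotone _ hz hw _

lemma min_le_sugeno (hμ : Monotone μ) {z : Fin n → ℝ} {S : Finset (Fin n)} (hS : S.Nonempty)
    {r : ℝ} (hr : ∀ j ∈ S, r ≤ z j) : min r (μ S) ≤ sugeno hn μ σ z := by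
  obtain ⟨m, hmS, hSm⟩ := exists_apply_mem_subset_SUp (σ := σ) hS
  exact le_sup'_of_le _ (mem_univ m) (min_le_min (hr _ hmS) (hμ hSm))

lemma IsCapacityOn.monotone {a b : ℝ} (hμ : IsCapacityOn a b μ) : Monotone μ :=
  fun S T hST => hμ.2.2 S T hST

def IsQuasiSugenoOn (a b c d : ℝ) (f : (Fin n → ℝ) → ℝ) : Prop :=
  ∃ μ : Finset (Fin n) → ℝ, ∃ φ : ℝ → ℝ, IsCapacityOn a b μ ∧ MonotoneOn φ (Set.Icc c d) ∧
    Set.MapsTo φ (Set.Icc c d) (Set.Icc a b) ∧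
    ∀ σ : Equiv.Perm (Fin n), ∀ x : Fin n → ℝ, (∀ i, x i ∈ Set.Icc c d) → Monotone (x ∘ σ) →
      f x = sugeno hn μ σ (φ ∘ x)

variable {a b c d : ℝ} {f : (Fin n → ℝ) → ℝ}

lemma IsQuasiSugenoOn.comonMaxitiveOn (hf : IsQuasiSugenoOn hn a b c d f) :
    ComonMaxitiveOn (Set.Icc c d) f := by
  obtain ⟨μ, φ, -, hφ, -, hrep⟩ := hf
  rintro x y hx hy ⟨σ, hxσ, hyσ⟩
  have hxy : ∀ i, max (x i) (y i) ∈ Set.Icc c d :=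
    fun i => ⟨le_max_of_le_left (hx i).1, max_le (hx i).2 (hy i).2⟩
  rw [hrep σ _ hxy (hxσ.max hyσ), hrep σ x hx hxσ, hrep σ y hy hyσ, ← sugeno_max]
  congr 1
  funext j
  exact hφ.map_max (hx j) (hy j)

lemma IsQuasiSugenoOn.comonMinitiveOn (hf : IsQuasiSugenoOn hn a b c d f) :
    ComonMinitiveOn (Set.Icc c d) f := by
  obtain ⟨μ, φ, -, hφ, -, hrep⟩ := hf
  rintro x y hx hy ⟨σ, hxσ, hyσ⟩
  have hxy : ∀ i, min (x i) (y i) ∈ Set.Icc c d :=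
    fun i => ⟨le_min (hx i).1 (hy i).1, min_le_of_left_le (hx i).2⟩
  have hφxσ : Monotone ((φ ∘ x) ∘ σ) := fun i j hij => hφ (hx _) (hx _) (hxσ hij)
  have hφyσ : Monotone ((φ ∘ y) ∘ σ) := fun i j hij => hφ (hy _) (hy _) (hyσ hij)
  rw [hrep σ _ hxy (hxσ.min hyσ), hrep σ x hx hxσ, hrep σ y hy hyσ, ← sugeno_min hn hφxσ hφyσ]
  congr 1
  funext j
  exact hφ.map_min (hx j) (hy j)

lemma IsQuasiSugenoOn.nondecreasingOn (hf : IsQuasiSugenoOn hn a b c d f) :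
    NondecreasingOn (Set.Icc c d) f := by
  obtain ⟨μ, φ, hμ, hφ, -, hrep⟩ := hf
  intro x y hx hy hxy
  have hxσ := Tuple.monotone_sort x
  rw [hrep _ x hx hxσ, hrep _ y hy (Tuple.monotone_sort y)]
  refine sup'_le _ _ fun i _ => min_le_sugeno hn hμ.monotone (SUp_nonempty i.isLt) fun j hj => ?_
  exact hφ (hx _) (hy _) ((apply_le_of_mem_SUp hxσ hj).trans (hxy j))

end Sugeno

section Representation

variable {n : ℕ} {a b c d : ℝ}

def stepTuple (c d : ℝ) (S : Finset (Fin n)) : Fin n → ℝ :=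
  fun j => if j ∈ S then d else c

lemma stepTuple_mem (hcd : c ≤ d) (S : Finset (Fin n)) (j : Fin n) :
    stepTuple c d S j ∈ Set.Icc c d := by
  unfold stepTuple
  split_ifs
  · exact Set.right_mem_Icc.2 hcd
  · exact Set.left_mem_Icc.2 hcd

lemma comonotone_stepTuple (hcd : c ≤ d) {S T : Finset (Fin n)} (hST : S ⊆ T) :
    Comonotone (stepTuple c d S) (stepTuple c d T) := by
  refine comonotone_of_forall_not_lt_lt fun p q hpq hqp => ?_
  unfold stepTuple at hpq hqp
  by_cases hq : q ∈ S
  · rw [if_pos (hST hq)] at hqp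
    exact hqp.not_ge (by split_ifs <;> simp [hcd])
  · rw [if_neg hq] at hpq
    exact hpq.not_ge (by split_ifs <;> simp [hcd])

lemma stepTuple_le_stepTuple (hcd : c ≤ d) {S T : Finset (Fin n)} (hST : S ⊆ T) (j : Fin n) :
    stepTuple c d S j ≤ stepTuple c d T j := by
  unfold stepTuple
  split_ifs with hS hT <;> first | exact le_rfl | exact hcd | exact absurd (hST hS) hT

lemma monotone_stepTuple_SUp (hcd : c ≤ d) (σ : Equiv.Perm (Fin n)) (k : ℕ) :
    Monotone (stepTuple c d (SUp σ k) ∘ σ) := by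
  intro i j hij
  simp only [Function.comp_apply, stepTuple, apply_mem_SUp]
  split_ifs with hi hj <;> first | exact le_rfl | exact hcd | exact absurd (hi.trans hij) hj

def withEndpoints (a b : ℝ) (ν : Finset (Fin n) → ℝ) (S : Finset (Fin n)) : ℝ :=
  if S = ∅ then a else if S = univ then b else ν S

lemma isCapacityOn_withEndpoints (hn : 0 < n) {ν : Finset (Fin n) → ℝ} (hν : Monotone ν)
    (hνI : ∀ S, ν S ∈ Set.Icc a b) : IsCapacityOn a b (withEndpoints a b ν) := by
  have huniv : (univ : Finset (Fin n)) ≠ ∅ := (univ_nonempty_iff.2 ⟨⟨0, hn⟩⟩).ne_empty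
  have hI : ∀ S, withEndpoints a b ν S ∈ Set.Icc a b := by
    intro S
    unfold withEndpoints
    split_ifs
    · exact Set.left_mem_Icc.2 ((hνI ∅).1.trans (hνI ∅).2)
    · exact Set.right_mem_Icc.2 ((hνI ∅).1.trans (hνI ∅).2)
    · exact hνI S
  refine ⟨if_pos rfl, by simp [withEndpoints, huniv], fun S T hST => ?_⟩
  by_cases hS : S = ∅
  · simpa [withEndpoints, hS] using (hI T).1
  by_cases hT : T = univ
  · simpa [withEndpoints, hT, huniv] using (hI S).2
  have hT0 : T ≠ ∅ := fun h => hS (subset_empty.1 (h ▸ hST))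
  have hS1 : S ≠ univ := fun h => hT (univ_subset_iff.1 (h ▸ hST))
  simpa [withEndpoints, hS, hT, hT0, hS1] using hν hST

lemma sugeno_withEndpoints (hn : 0 < n) {ν : Finset (Fin n) → ℝ} {σ : Equiv.Perm (Fin n)}
    {z : Fin n → ℝ} (hzb : ∀ j, z j ≤ b) (hzν : ∀ j, z j ≤ ν univ) :
    sugeno hn (withEndpoints a b ν) σ z = sugeno hn ν σ z := by
  unfold sugeno
  congr 1
  funext i
  by_cases hi : (i : ℕ) = 0
  · have huniv : (univ : Finset (Fin n)) ≠ ∅ := (univ_nonempty_iff.2 ⟨i⟩).ne_empty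
    rw [hi, SUp_zero, withEndpoints, if_neg huniv, if_pos rfl, min_eq_left (hzb _),
      min_eq_left (hzν _)]
  · rw [withEndpoints, if_neg (SUp_nonempty i.isLt).ne_empty, if_neg (SUp_ne_univ hi)]

variable {f : (Fin n → ℝ) → ℝ} {φ : ℝ → ℝ}

lemma min_apply_stepTuple_le (hcd : c ≤ d) (hf : ComonNondecreasingOn (Set.Icc c d) f)
    (hhom : MaxMinHomogeneousOn (Set.Icc c d) φ f) {σ : Equiv.Perm (Fin n)} {x : Fin n → ℝ}
    (hx : ∀ i, x i ∈ Set.Icc c d) (hxσ : Monotone (x ∘ σ)) (i : Fin n) :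
    min (φ (x (σ i))) (f (stepTuple c d (SUp σ i))) ≤ f x := by
  rw [← (hhom _ (stepTuple_mem hcd _) _ (hx _)).2]
  refine hf _ _ (fun j => ⟨le_min (hx _).1 (stepTuple_mem hcd _ j).1, min_le_of_left_le (hx _).2⟩)
    hx ⟨σ, monotone_const.min (monotone_stepTuple_SUp hcd σ i), hxσ⟩ fun j => ?_
  by_cases hj : j ∈ SUp σ i
  · exact min_le_of_left_le (apply_le_of_mem_SUp hxσ hj)
  · exact min_le_of_right_le ((if_neg hj).trans_le (hx j).1)

lemma min_stepTuple_mem (hcd : c ≤ d) {x : Fin n → ℝ} (hx : ∀ i, x i ∈ Set.Icc c d)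
    (S : Finset (Fin n)) (j : Fin n) : min (x j) (stepTuple c d S j) ∈ Set.Icc c d :=
  ⟨le_min (hx j).1 (stepTuple_mem hcd S j).1, min_le_of_left_le (hx j).2⟩

lemma apply_min_stepTuple_le_max (hcd : c ≤ d) (hf : ComonNondecreasingOn (Set.Icc c d) f)
    (hhom : MaxMinHomogeneousOn (Set.Icc c d) φ f) {σ : Equiv.Perm (Fin n)} {x : Fin n → ℝ}
    (hx : ∀ i, x i ∈ Set.Icc c d) (hxσ : Monotone (x ∘ σ)) {k : ℕ} (hk : k < n) :
    f (fun j => min (x j) (stepTuple c d (SUp σ k) j)) ≤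
      max (min (φ (x (σ ⟨k, hk⟩))) (f (stepTuple c d (SUp σ k))))
        (f fun j => min (x j) (stepTuple c d (SUp σ (k + 1)) j)) := by
  have hyσ : ∀ l, Monotone ((fun j => min (x j) (stepTuple c d (SUp σ l) j)) ∘ σ) :=
    fun l => hxσ.min (monotone_stepTuple_SUp hcd σ l)
  have hmax : f (fun j => min (x j) (stepTuple c d (SUp σ k) j)) ≤
      max (φ (x (σ ⟨k, hk⟩))) (f fun j => min (x j) (stepTuple c d (SUp σ (k + 1)) j)) := by
    rw [← (hhom _ (min_stepTuple_mem hcd hx _) _ (hx _)).1]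
    refine hf _ _ (min_stepTuple_mem hcd hx _) (fun j => ⟨le_max_of_le_left (hx _).1,
      max_le (hx _).2 (min_stepTuple_mem hcd hx _ j).2⟩)
      ⟨σ, hyσ k, monotone_const.max (hyσ (k + 1))⟩ fun j => ?_
    by_cases hj : k + 1 ≤ (σ.symm j : ℕ)
    · refine le_max_of_le_right (min_le_min_left _ ?_)
      rw [show stepTuple c d (SUp σ (k + 1)) j = d from if_pos (mem_SUp.2 hj)]
      exact (stepTuple_mem hcd _ j).2
    · refine le_max_of_le_left (min_le_of_left_le ?_)
      simpa using hxσ (show σ.symm j ≤ ⟨k, hk⟩ from Nat.le_of_lt_succ (not_le.1 hj))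
  have hstep : f (fun j => min (x j) (stepTuple c d (SUp σ k) j)) ≤
      f (stepTuple c d (SUp σ k)) :=
    hf _ _ (min_stepTuple_mem hcd hx _) (stepTuple_mem hcd _)
      ⟨σ, hyσ k, monotone_stepTuple_SUp hcd σ k⟩ fun j => min_le_right _ _
  calc _ ≤ min (max (φ (x (σ ⟨k, hk⟩))) (f fun j => min (x j) (stepTuple c d (SUp σ (k + 1)) j)))
        (f (stepTuple c d (SUp σ k))) := le_min hmax hstep
    _ ≤ _ := by
      rw [min_max_distrib_right]
      exact max_le_max le_rfl (min_le_left _ _)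

lemma le_sugeno_stepTuple (hn : 0 < n) (hcd : c ≤ d) (hf : ComonNondecreasingOn (Set.Icc c d) f)
    (hφ : MonotoneOn φ (Set.Icc c d)) (hhom : MaxMinHomogeneousOn (Set.Icc c d) φ f)
    {σ : Equiv.Perm (Fin n)} {x : Fin n → ℝ} (hx : ∀ i, x i ∈ Set.Icc c d)
    (hxσ : Monotone (x ∘ σ)) :
    f x ≤ sugeno hn (fun S => f (stepTuple c d S)) σ (φ ∘ x) := by
  -- the `k`-th tuple keeps the entries of `x` at `σ k, …, σ (n-1)` and lowers the others to `c`
  have hc : c ∈ Set.Icc c d := Set.left_mem_Icc.2 hcd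
  have hlast : f (fun j => min (x j) (stepTuple c d (SUp σ n) j)) ≤
      sugeno hn (fun S => f (stepTuple c d S)) σ (φ ∘ x) :=
    calc _ ≤ φ c := hhom.apply_le (min_stepTuple_mem hcd hx _) hc fun j =>
          min_le_of_right_le (by simp [stepTuple, SUp_self])
      _ ≤ min (φ (x (σ ⟨0, hn⟩))) (f (stepTuple c d (SUp σ 0))) :=
          le_min (hφ hc (hx _) (hx _).1)
            (hhom.le_apply (stepTuple_mem hcd _) hc fun j => (stepTuple_mem hcd _ j).1)
      _ ≤ _ := le_sup' (fun i : Fin n => min (φ (x (σ i))) (f (stepTuple c d (SUp σ i))))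
          (mem_univ ⟨0, hn⟩)
  have h := le_sup'_of_forall_le_max_succ _ _
    (fun k => f fun j => min (x j) (stepTuple c d (SUp σ k) j))
    (fun _ hk => apply_min_stepTuple_le_max hcd hf hhom hx hxσ hk) hlast
  have hx0 : (fun j => min (x j) (stepTuple c d (SUp σ 0) j)) = x :=
    funext fun j => min_eq_left (by simpa [stepTuple, SUp_zero] using (hx j).2)
  rwa [hx0] at h

lemma isQuasiSugenoOn_of_maxMinHomogeneousOn (hn : 0 < n) (hcd : c ≤ d)
    (hfI : ∀ x : Fin n → ℝ, (∀ i, x i ∈ Set.Icc c d) → f x ∈ Set.Icc a b)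
    (hf : ComonNondecreasingOn (Set.Icc c d) f) (hφ : MonotoneOn φ (Set.Icc c d))
    (hφI : Set.MapsTo φ (Set.Icc c d) (Set.Icc a b))
    (hhom : MaxMinHomogeneousOn (Set.Icc c d) φ f) : IsQuasiSugenoOn hn a b c d f := by
  set ν : Finset (Fin n) → ℝ := fun S => f (stepTuple c d S)
  have hν : Monotone ν := fun S T hST =>
    hf _ _ (stepTuple_mem hcd S) (stepTuple_mem hcd T) (comonotone_stepTuple hcd hST)
      (stepTuple_le_stepTuple hcd hST)
  -- `ν ∅ = f (c, …, c)` and `ν univ = f (d, …, d)` need not be `a` and `b`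
  refine ⟨withEndpoints a b ν, φ,
    isCapacityOn_withEndpoints hn hν fun S => hfI _ (stepTuple_mem hcd S), hφ, hφI,
    fun σ x hx hxσ => ?_⟩
  rw [sugeno_withEndpoints (z := φ ∘ x) hn (fun j => (hφI (hx j)).2)
    fun j => hhom.le_apply (stepTuple_mem hcd _) (hx j) fun _ => by
      simpa [stepTuple] using (hx j).2]
  exact le_antisymm (le_sugeno_stepTuple hn hcd hf hφ hhom hx hxσ)
    (sup'_le _ _ fun i _ => min_apply_stepTuple_le hcd hf hhom hx hxσ i)

end Representation

theorem statement18_general (n : ℕ) (hn : 0 < n) (a b c d : ℝ) (hcd : c < d)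
    (f : (Fin n → ℝ) → ℝ)
    (hfI : ∀ x : Fin n → ℝ, (∀ i, x i ∈ Set.Icc c d) → f x ∈ Set.Icc a b) :
    ((∃ μ : Finset (Fin n) → ℝ, ∃ φ : ℝ → ℝ, IsCapacityOn a b μ ∧
        (∀ y ∈ Set.Icc c d, ∀ z ∈ Set.Icc c d, y ≤ z → φ y ≤ φ z) ∧
        (∀ y ∈ Set.Icc c d, φ y ∈ Set.Icc a b) ∧
        ∀ σ : Equiv.Perm (Fin n), ∀ x : Fin n → ℝ,
          (∀ i, x i ∈ Set.Icc c d) → Monotone (x ∘ σ) →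
          f x = Finset.sup' Finset.univ ⟨⟨0, hn⟩, Finset.mem_univ _⟩
            (fun i : Fin n => min (φ (x (σ i))) (μ (SUp σ (i : ℕ)))))
      ↔ (ComonMaxitiveOn (Set.Icc c d) f ∧ ComonMinitiveOn (Set.Icc c d) f))
    ∧
    ((∃ μ : Finset (Fin n) → ℝ, ∃ φ : ℝ → ℝ, IsCapacityOn a b μ ∧
        (∀ y ∈ Set.Icc c d, ∀ z ∈ Set.Icc c d, y ≤ z → φ y ≤ φ z) ∧
        (∀ y ∈ Set.Icc c d, φ y ∈ Set.Icc a b) ∧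
        ∀ σ : Equiv.Perm (Fin n), ∀ x : Fin n → ℝ,
          (∀ i, x i ∈ Set.Icc c d) → Monotone (x ∘ σ) →
          f x = Finset.sup' Finset.univ ⟨⟨0, hn⟩, Finset.mem_univ _⟩
            (fun i : Fin n => min (φ (x (σ i))) (μ (SUp σ (i : ℕ)))))
      ↔ (NondecreasingOn (Set.Icc c d) f ∧
          ∃ φ : ℝ → ℝ, (∀ y ∈ Set.Icc c d, ∀ z ∈ Set.Icc c d, y ≤ z → φ y ≤ φ z) ∧
            (∀ y ∈ Set.Icc c d, φ y ∈ Set.Icc a b) ∧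
            ∀ x : Fin n → ℝ, (∀ i, x i ∈ Set.Icc c d) → ∀ r ∈ Set.Icc c d,
              f (fun i => max r (x i)) = max (φ r) (f x) ∧
              f (fun i => min r (x i)) = min (φ r) (f x)))
    ∧
    ((∃ μ : Finset (Fin n) → ℝ, ∃ φ : ℝ → ℝ, IsCapacityOn a b μ ∧
        (∀ y ∈ Set.Icc c d, ∀ z ∈ Set.Icc c d, y ≤ z → φ y ≤ φ z) ∧
        (∀ y ∈ Set.Icc c d, φ y ∈ Set.Icc a b) ∧
        ∀ σ : Equiv.Perm (Fin n), ∀ x : Fin n → ℝ,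
          (∀ i, x i ∈ Set.Icc c d) → Monotone (x ∘ σ) →
          f x = Finset.sup' Finset.univ ⟨⟨0, hn⟩, Finset.mem_univ _⟩
            (fun i : Fin n => min (φ (x (σ i))) (μ (SUp σ (i : ℕ)))))
      → (NondecreasingOn (Set.Icc c d) f ∧
          ∀ x : Fin n → ℝ, (∀ i, x i ∈ Set.Icc c d) → ∀ r ∈ Set.Icc c d,
            f (fun i => max r (x i)) = max (f (fun _ => r)) (f x) ∧
            f (fun i => min r (x i)) = min (f (fun _ => r)) (f x))) := by
  show (IsQuasiSugenoOn hn a b c d f ↔ _) ∧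
    (IsQuasiSugenoOn hn a b c d f ↔ NondecreasingOn _ f ∧ ∃ φ : ℝ → ℝ, MonotoneOn φ (Set.Icc c d) ∧
      Set.MapsTo φ (Set.Icc c d) (Set.Icc a b) ∧ MaxMinHomogeneousOn (Set.Icc c d) φ f) ∧
    (IsQuasiSugenoOn hn a b c d f →
      NondecreasingOn _ f ∧ MaxMinHomogeneousOn (Set.Icc c d) (fun r => f fun _ => r) f)
  have hdiagI : Set.MapsTo (fun r => f fun _ => r) (Set.Icc c d) (Set.Icc a b) :=
    fun r hr => hfI _ fun _ => hr
  have of_comon : ComonMaxitiveOn (Set.Icc c d) f → ComonMinitiveOn (Set.Icc c d) f →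
      IsQuasiSugenoOn hn a b c d f := fun hmax hmin =>
    isQuasiSugenoOn_of_maxMinHomogeneousOn hn hcd.le hfI hmax.comonNondecreasingOn
      hmax.comonNondecreasingOn.monotoneOn_diag hdiagI (maxMinHomogeneousOn_diag hmax hmin)
  have to_diag (hf : IsQuasiSugenoOn hn a b c d f) :
      NondecreasingOn _ f ∧ MaxMinHomogeneousOn (Set.Icc c d) (fun r => f fun _ => r) f :=
    ⟨hf.nondecreasingOn, maxMinHomogeneousOn_diag hf.comonMaxitiveOn hf.comonMinitiveOn⟩
  refine ⟨⟨fun hf => ⟨hf.comonMaxitiveOn, hf.comonMinitiveOn⟩, fun h => of_comon h.1 h.2⟩,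
    ⟨fun hf => ?_, fun ⟨hmono, φ, hφ, hφI, hhom⟩ => ?_⟩, to_diag⟩
  · exact ⟨(to_diag hf).1, _, hf.comonMaxitiveOn.comonNondecreasingOn.monotoneOn_diag, hdiagI,
      (to_diag hf).2⟩
  · exact isQuasiSugenoOn_of_maxMinHomogeneousOn hn hcd.le hfI hmono.comonNondecreasingOn hφ hφI
      hhom

theorem statement18 (n : ℕ) (hn : 0 < n) (a b c d : ℝ) (hab : a < b) (hcd : c < d)
    (f : (Fin n → ℝ) → ℝ)
    (hfI : ∀ x : Fin n → ℝ, (∀ i, x i ∈ Set.Icc c d) → f x ∈ Set.Icc a b) :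
    ((∃ μ : Finset (Fin n) → ℝ, ∃ φ : ℝ → ℝ, IsCapacityOn a b μ ∧
        (∀ y ∈ Set.Icc c d, ∀ z ∈ Set.Icc c d, y ≤ z → φ y ≤ φ z) ∧
        (∀ y ∈ Set.Icc c d, φ y ∈ Set.Icc a b) ∧
        ∀ σ : Equiv.Perm (Fin n), ∀ x : Fin n → ℝ,
          (∀ i, x i ∈ Set.Icc c d) → Monotone (x ∘ σ) →
          f x = Finset.sup' Finset.univ ⟨⟨0, hn⟩, Finset.mem_univ _⟩
            (fun i : Fin n => min (φ (x (σ i))) (μ (SUp σ (i : ℕ)))))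
      ↔ (ComonMaxitiveOn (Set.Icc c d) f ∧ ComonMinitiveOn (Set.Icc c d) f))
    ∧
    ((∃ μ : Finset (Fin n) → ℝ, ∃ φ : ℝ → ℝ, IsCapacityOn a b μ ∧
        (∀ y ∈ Set.Icc c d, ∀ z ∈ Set.Icc c d, y ≤ z → φ y ≤ φ z) ∧
        (∀ y ∈ Set.Icc c d, φ y ∈ Set.Icc a b) ∧
        ∀ σ : Equiv.Perm (Fin n), ∀ x : Fin n → ℝ,
          (∀ i, x i ∈ Set.Icc c d) → Monotone (x ∘ σ) →
          f x = Finset.sup' Finset.univ ⟨⟨0, hn⟩, Finset.mem_univ _⟩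
            (fun i : Fin n => min (φ (x (σ i))) (μ (SUp σ (i : ℕ)))))
      ↔ (NondecreasingOn (Set.Icc c d) f ∧
          ∃ φ : ℝ → ℝ, (∀ y ∈ Set.Icc c d, ∀ z ∈ Set.Icc c d, y ≤ z → φ y ≤ φ z) ∧
            (∀ y ∈ Set.Icc c d, φ y ∈ Set.Icc a b) ∧
            ∀ x : Fin n → ℝ, (∀ i, x i ∈ Set.Icc c d) → ∀ r ∈ Set.Icc c d,
              f (fun i => max r (x i)) = max (φ r) (f x) ∧
              f (fun i => min r (x i)) = min (φ r) (f x)))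
    ∧
    ((∃ μ : Finset (Fin n) → ℝ, ∃ φ : ℝ → ℝ, IsCapacityOn a b μ ∧
        (∀ y ∈ Set.Icc c d, ∀ z ∈ Set.Icc c d, y ≤ z → φ y ≤ φ z) ∧
        (∀ y ∈ Set.Icc c d, φ y ∈ Set.Icc a b) ∧
        ∀ σ : Equiv.Perm (Fin n), ∀ x : Fin n → ℝ,
          (∀ i, x i ∈ Set.Icc c d) → Monotone (x ∘ σ) →
          f x = Finset.sup' Finset.univ ⟨⟨0, hn⟩, Finset.mem_univ _⟩
            (fun i : Fin n => min (φ (x (σ i))) (μ (SUp σ (i : ℕ)))))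
      → (NondecreasingOn (Set.Icc c d) f ∧
          ∀ x : Fin n → ℝ, (∀ i, x i ∈ Set.Icc c d) → ∀ r ∈ Set.Icc c d,
            f (fun i => max r (x i)) = max (f (fun _ => r)) (f x) ∧
            f (fun i => min r (x i)) = min (f (fun _ => r)) (f x))) :=
  statement18_general n hn a b c d hcd f hfI
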